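/- In matrix form: if [φ]_B = [a_ij] is the matrix of the idempotent φ defining a projective module E, then for derivations x, y ∈ Der_k(A) the matrix of the curvature of the lifted connection is [a_ij] · ([x(a_ij)]·[y(a_ij)] − [y(a_ij)]·[x(a_ij)]). -/
import Mathlib


/-- The operator `ρ_B(x)` applying the derivation `x` to each coordinate of `Aⁿ`. -/
def rhoB {k A : Type*} [CommRing k] [CommRing A] [Algebra k A] {n : ℕ}
    (x : Derivation k A A) (u : Fin n → A) : Fin n → A :=
  fun i => x (u i)

/-- The `(L,φ)`-connection `∇̄(x) = φ ∘ ρ_B(x) ∘ φ` on `Aⁿ` determined by the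
idempotent matrix `P`. -/
def nablaBar {k A : Type*} [CommRing k] [CommRing A] [Algebra k A] {n : ℕ}
    (P : Matrix (Fin n) (Fin n) A) (x : Derivation k A A) (u : Fin n → A) : Fin n → A :=
  P.mulVec (rhoB x (P.mulVec u))

lemma map_mul_leib {k A : Type*} [CommRing k] [CommRing A] [Algebra k A] {n : ℕ}
    (d : Derivation k A A) (M N : Matrix (Fin n) (Fin n) A) :
    (M * N).map ⇑d = M.map ⇑d * N + M * N.map ⇑d := by
  ext i j
  simp only [Matrix.map_apply, Matrix.mul_apply, Matrix.add_apply, map_sum,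
    Derivation.leibniz, smul_eq_mul, Finset.sum_add_distrib]
  rw [add_comm]
  congr 1
  exact Finset.sum_congr rfl fun l _ => mul_comm _ _

lemma nabla_col {k A : Type*} [CommRing k] [CommRing A] [Algebra k A] {n : ℕ}
    (P M : Matrix (Fin n) (Fin n) A) (d : Derivation k A A) (j : Fin n) :
    nablaBar P d (fun l => M l j) = fun i => (P * (P.map ⇑d * M + P * M.map ⇑d)) i j := by
  funext i
  simp only [nablaBar, rhoB, Matrix.mulVec, dotProduct, Matrix.mul_apply,
    Matrix.map_apply, Matrix.add_apply, map_sum, Derivation.leibniz, smul_eq_mul]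
  refine Finset.sum_congr rfl fun k _ => ?_
  have hc : (∑ l, M l j * d (P k l)) = ∑ l, d (P k l) * M l j :=
    Finset.sum_congr rfl fun l _ => mul_comm _ _
  rw [Finset.sum_add_distrib, hc]
  ring

lemma curv_alg {A : Type*} [CommRing A] {n : ℕ}
    (P Px Py Pxy Pyx : Matrix (Fin n) (Fin n) A) (hP : P * P = P)
    (h0x : P * Px * P = 0) (h0y : P * Py * P = 0) :
    P * (Px * (P * Py) + P * (Px * Py + P * Pxy))
      - P * (Py * (P * Px) + P * (Py * Px + P * Pyx))
      - P * (Pxy - Pyx)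
      = P * (Px * Py - Py * Px) := by
  simp only [Matrix.mul_add, Matrix.mul_sub, ← Matrix.mul_assoc, hP, h0x, h0y,
    Matrix.zero_mul, zero_add, add_zero]
  abel

/-- in matrix form, the matrix (in the standard basis) of the
curvature `R(x,y) = [∇̄x,∇̄y] − ∇̄[x,y]` of the lifted connection determined by the
idempotent matrix `[a_ij]` is `[a_ij]·([x(a_ij)]·[y(a_ij)] − [y(a_ij)]·[x(a_ij)])`. -/
theorem stmt_6 {k A : Type*} [CommRing k] [CommRing A] [Algebra k A]
    (n : ℕ) (P : Matrix (Fin n) (Fin n) A) (hP : P * P = P)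
    (x y : Derivation k A A) :
    (Matrix.of fun i j =>
        (nablaBar P x (nablaBar P y (Pi.single j 1))
          - nablaBar P y (nablaBar P x (Pi.single j 1))
          - nablaBar P ⁅x, y⁆ (Pi.single j 1)) i) =
      P * ((P.map fun a => x a) * (P.map fun a => y a)
        - (P.map fun a => y a) * (P.map fun a => x a)) := by
  have hone : ∀ (d : Derivation k A A), (1 : Matrix (Fin n) (Fin n) A).map ⇑d = 0 := by
    intro d; ext i j; by_cases h : i = j <;> simp [Matrix.one_apply, h]
  have hcol : ∀ (d : Derivation k A A) (j : Fin n),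
      nablaBar P d (Pi.single j 1) = fun i => (P * P.map ⇑d) i j := by
    intro d j
    have hsingle : (Pi.single j 1 : Fin n → A) = fun l => (1 : Matrix (Fin n) (Fin n) A) l j := by
      funext l; simp [Matrix.one_apply, Pi.single_apply]
    rw [hsingle, nabla_col]
    simp [hone]
  have hx : P.map ⇑x * P + P * P.map ⇑x = P.map ⇑x := by
    have := congrArg (Matrix.map · ⇑x) hP
    simpa [map_mul_leib] using this
  have hy : P.map ⇑y * P + P * P.map ⇑y = P.map ⇑y := by
    have := congrArg (Matrix.map · ⇑y) hP
    simpa [map_mul_leib] using this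
  have h0x : P * P.map ⇑x * P = 0 := by
    have h := congrArg (P * ·) hx
    simp only [Matrix.mul_add, ← Matrix.mul_assoc, hP] at h
    exact add_eq_right.mp h
  have h0y : P * P.map ⇑y * P = 0 := by
    have h := congrArg (P * ·) hy
    simp only [Matrix.mul_add, ← Matrix.mul_assoc, hP] at h
    exact add_eq_right.mp h
  have hmm : ((P * P.map ⇑y).map ⇑x) = P.map ⇑x * P.map ⇑y + P * P.map (fun a => x (y a)) := by
    rw [map_mul_leib]
    congr 1
  have hmm' : ((P * P.map ⇑x).map ⇑y) = P.map ⇑y * P.map ⇑x + P * P.map (fun a => y (x a)) := by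
    rw [map_mul_leib]
    congr 1
  have hbr : P.map ⇑⁅x, y⁆ = P.map (fun a => x (y a)) - P.map (fun a => y (x a)) := by
    ext i j; simp [Derivation.commutator_apply]
  have key : P * (P.map ⇑x * (P * P.map ⇑y) + P * ((P * P.map ⇑y).map ⇑x))
      - P * (P.map ⇑y * (P * P.map ⇑x) + P * ((P * P.map ⇑x).map ⇑y))
      - P * P.map ⇑⁅x, y⁆
      = P * (P.map ⇑x * P.map ⇑y - P.map ⇑y * P.map ⇑x) := by
    rw [hmm, hmm', hbr]
    exact curv_alg P (P.map ⇑x) (P.map ⇑y) _ _ hP h0x h0y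
  ext i j
  simp only [Matrix.of_apply, Pi.sub_apply]
  rw [hcol y j, hcol x j, hcol ⁅x, y⁆ j]
  rw [show (nablaBar P x fun i => (P * P.map ⇑y) i j)
      = fun i => (P * (P.map ⇑x * (P * P.map ⇑y) + P * ((P * P.map ⇑y).map ⇑x))) i j
      from nabla_col P (P * P.map ⇑y) x j]
  rw [show (nablaBar P y fun i => (P * P.map ⇑x) i j)
      = fun i => (P * (P.map ⇑y * (P * P.map ⇑x) + P * ((P * P.map ⇑x).map ⇑y))) i j
      from nabla_col P (P * P.map ⇑x) y j]
  calc _ = (P * (P.map ⇑x * (P * P.map ⇑y) + P * ((P * P.map ⇑y).map ⇑x))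
      - P * (P.map ⇑y * (P * P.map ⇑x) + P * ((P * P.map ⇑x).map ⇑y))
      - P * P.map ⇑⁅x, y⁆) i j := by simp [Matrix.sub_apply]
    _ = (P * (P.map ⇑x * P.map ⇑y - P.map ⇑y * P.map ⇑x)) i j := by rw [key]
    _ = _ := rfl
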